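/- arXiv:1011.2950 — 2 statements merged into one kernel-verified Lean document; each statement's English description precedes it below -/
import Mathlib

section
/- For every ν in the dual lattice N with ⟨ν, e_i⟩ > 0 for all 1 ≤ i ≤ d, and for every 1 ≤ k ≤ d, the vector w_k produced by the recursive algorithm belongs to the finite set J_k and computes the support function of the k-th logarithmic jacobian ideal at ν, that is, ⟨ν, w_k⟩ = ord_{J_k}(ν) = min_{w ∈ J_k} ⟨ν, w⟩. -/
open scoped BigOperators Classical

namespace QO

/-- The standard pairing `⟨ν, m⟩ = ∑ i, ν i * m i` on `ℚ^d`. -/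
def pair (d : ℕ) (ν m : Fin d → ℚ) : ℚ := ∑ i, ν i * m i

/-- `E d lam i` is the `i`-th standard basis vector of `ℚ^d` for `1 ≤ i ≤ d`,
and equals the characteristic exponent `λ_{i-d}` for `d + 1 ≤ i` (1-based indexing). -/
def E (d : ℕ) (lam : ℕ → Fin d → ℚ) (i : ℕ) : Fin d → ℚ :=
  if 1 ≤ i ∧ i ≤ d then (fun j => if (j : ℕ) = i - 1 then 1 else 0) else lam (i - d)

/-- The lattice `M_j = ℤ^d + ℤλ_1 + ⋯ + ℤλ_j`, as an additive subgroup of `ℚ^d`. -/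
def Mlat (d : ℕ) (lam : ℕ → Fin d → ℚ) : ℕ → AddSubgroup (Fin d → ℚ)
  | 0 => AddSubgroup.closure (Set.range fun i : Fin d => (fun j => if j = i then (1 : ℚ) else 0))
  | (j + 1) => Mlat d lam j ⊔ AddSubgroup.closure {lam (j + 1)}

/-- The dual lattice `N` of `M = M_g`. -/
def Ndual (d g : ℕ) (lam : ℕ → Fin d → ℚ) : Set (Fin d → ℚ) :=
  { ν | ∀ m ∈ Mlat d lam g, ∃ z : ℤ, pair d ν m = (z : ℚ) }

/-- Admissible index sets for `J_k`: `k` indices in `{1, …, d+g}`, at most one of which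
exceeds `d`, whose associated vectors are linearly independent over `ℚ`. -/
def IdxOk (d g : ℕ) (lam : ℕ → Fin d → ℚ) (k : ℕ) (I : Finset ℕ) : Prop :=
  I.card = k ∧ I ⊆ Finset.Icc 1 (d + g) ∧ (I.filter fun i => d + 1 ≤ i).card ≤ 1 ∧
    LinearIndependent ℚ (fun i : {x // x ∈ I} => E d lam i.1)

/-- The set `J_k` of sums `e_{j_1} + ⋯ + e_{j_k}`. -/
def Jset (d g : ℕ) (lam : ℕ → Fin d → ℚ) (k : ℕ) : Set (Fin d → ℚ) :=
  { w | ∃ I : Finset ℕ, IdxOk d g lam k I ∧ w = ∑ i ∈ I, E d lam i }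

/-- The set `J_k`, as a finite set. -/
noncomputable def Jfin (d g : ℕ) (lam : ℕ → Fin d → ℚ) (k : ℕ) : Finset (Fin d → ℚ) :=
  ((Finset.Icc 1 (d + g)).powerset.filter fun I => IdxOk d g lam k I).image
    fun I => ∑ i ∈ I, E d lam i

/-- The support function `ord_{J_k}(ν) = min_{w ∈ J_k} ⟨ν, w⟩`. -/
noncomputable def ordJ (d g : ℕ) (lam : ℕ → Fin d → ℚ) (k : ℕ) (ν : Fin d → ℚ) : ℚ :=
  if h : (Jfin d g lam k).Nonempty then ((Jfin d g lam k).image (pair d ν)).min' (h.image _)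
  else 0

/-- `φ_k(ν) = ord_{J_k}(ν) - ord_{J_{k-1}}(ν)` (note `ord_{J_0} = 0`, hence also `φ_0 = 0`). -/
noncomputable def phiJ (d g : ℕ) (lam : ℕ → Fin d → ℚ) (k : ℕ) (ν : Fin d → ℚ) : ℚ :=
  ordJ d g lam k ν - ordJ d g lam (k - 1) ν

/-- The sort key of the total order `≤_ν` on the indices `1, …, d+g`: sort by the value
`⟨ν, ·⟩`, breaking ties (in particular ties between an `e_i` with `i ≤ d` and a `λ_j`)
by the index, so that `e_i` is placed first. -/
noncomputable def keyIdx (d : ℕ) (lam : ℕ → Fin d → ℚ) (ν : Fin d → ℚ) (i : ℕ) : ℚ ×ₗ ℕ :=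
  toLex (pair d ν (E d lam i), i)

/-- The `≤_ν`-least element of a finite set of indices. -/
noncomputable def leastIdx (d : ℕ) (lam : ℕ → Fin d → ℚ) (ν : Fin d → ℚ) (S : Finset ℕ) : ℕ :=
  if h : S.Nonempty then (ofLex ((S.image (keyIdx d lam ν)).min' (h.image _))).2 else 0

/-- The `≤_ν`-greatest element of a finite set of indices. -/
noncomputable def greatestIdx (d : ℕ) (lam : ℕ → Fin d → ℚ) (ν : Fin d → ℚ)
    (S : Finset ℕ) : ℕ :=
  if h : S.Nonempty then (ofLex ((S.image (keyIdx d lam ν)).max' (h.image _))).2 else 0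

/-- The `ℚ`-span of the vectors indexed by `I`. -/
def spanOf (d : ℕ) (lam : ℕ → Fin d → ℚ) (I : Finset ℕ) : Submodule ℚ (Fin d → ℚ) :=
  Submodule.span ℚ ((fun i => E d lam i) '' (I : Set ℕ))

/-- `n(k)`: the index `n` such that `λ_n` is a summand of `w_k`, and `0` if there is none. -/
noncomputable def nVal (d : ℕ) (I : Finset ℕ) : ℕ :=
  if h : (I.filter fun i => d + 1 ≤ i).Nonempty then (I.filter fun i => d + 1 ≤ i).min' h - d
  else 0

/-- `t(k)`: the least `1 ≤ j ≤ g` with `λ_j ∉ ℓ_k(ν)`, and `g + 1` if there is none. -/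
noncomputable def tVal (d g : ℕ) (lam : ℕ → Fin d → ℚ) (I : Finset ℕ) : ℕ :=
  if h : ((Finset.Icc 1 g).filter fun j => lam j ∉ spanOf d lam I).Nonempty then
    ((Finset.Icc 1 g).filter fun j => lam j ∉ spanOf d lam I).min' h
  else g + 1

/-- `m(k)`: the index `m` with `({e_1, …, e_d} ∩ ℓ_k(ν)) ∖ {summands of w_k} = {e_m}`,
and `0` if this set is empty. -/
noncomputable def mVal (d : ℕ) (lam : ℕ → Fin d → ℚ) (I : Finset ℕ) : ℕ :=
  if h : (((Finset.Icc 1 d).filter fun i => E d lam i ∈ spanOf d lam I) \ I).Nonempty then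
    (((Finset.Icc 1 d).filter fun i => E d lam i ∈ spanOf d lam I) \ I).min' h
  else 0

/-- `i(k)`: the `≤_ν`-least index `1 ≤ i ≤ d + g` with `w_k + e_i ∈ J_{k+1}`. -/
noncomputable def iVal (d g : ℕ) (lam : ℕ → Fin d → ℚ) (ν : Fin d → ℚ) (k : ℕ)
    (I : Finset ℕ) : ℕ :=
  leastIdx d lam ν ((Finset.Icc 1 (d + g)).filter fun i => IdxOk d g lam (k + 1) (insert i I))

/-- One step of the algorithm, from the summands of `w_k` to the summands of `w_{k+1}`:
`a_{k+1} = w_k + e_{i(k)}` and `b_{k+1} = w_k - λ_{n(k)} + λ_{t(k)} + e_{m(k)}`; the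
candidate `b_{k+1}` is discarded when `m(k) = 0` or `t(k) = g + 1`, and otherwise
`w_{k+1} = a_{k+1}` exactly when `⟨ν, a_{k+1}⟩ ≤ ⟨ν, b_{k+1}⟩`. -/
noncomputable def step (d g : ℕ) (lam : ℕ → Fin d → ℚ) (ν : Fin d → ℚ) (k : ℕ)
    (I : Finset ℕ) : Finset ℕ :=
  let a : Finset ℕ := insert (iVal d g lam ν k I) I
  let b : Finset ℕ :=
    insert (mVal d lam I) (insert (d + tVal d g lam I)
      (if nVal d I = 0 then I else I.erase (d + nVal d I)))
  if mVal d lam I = 0 ∨ tVal d g lam I = g + 1 then a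
  else if pair d ν (∑ i ∈ a, E d lam i) ≤ pair d ν (∑ i ∈ b, E d lam i) then a else b

/-- The index sets `W ν k` of summands of the algorithm's vectors `w_k`; the vector `w_1`
is the `≤_ν`-least element of `{e_1, …, e_d, λ_1}`. -/
noncomputable def W (d g : ℕ) (lam : ℕ → Fin d → ℚ) (ν : Fin d → ℚ) : ℕ → Finset ℕ
  | 0 => ∅
  | 1 => {leastIdx d lam ν (insert (d + 1) (Finset.Icc 1 d))}
  | (k + 2) => step d g lam ν (k + 1) (W d g lam ν (k + 1))

/-- The algorithm's vector `w_k`. -/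
noncomputable def wVec (d g : ℕ) (lam : ℕ → Fin d → ℚ) (ν : Fin d → ℚ) (k : ℕ) :
    Fin d → ℚ :=
  ∑ i ∈ W d g lam ν k, E d lam i

/-- `ℓ_k(ν)`: the `ℚ`-span of the summands of `w_k`. -/
noncomputable def ellK (d g : ℕ) (lam : ℕ → Fin d → ℚ) (ν : Fin d → ℚ) (k : ℕ) :
    Submodule ℚ (Fin d → ℚ) :=
  spanOf d lam (W d g lam ν k)

/-- `ℓ_ν^s = span_ℚ{e_j : 1 ≤ j < d + t(k), ⟨ν, e_j⟩ ≤ s}`, where `k` is the index with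
`φ_k(ν) ≤ s < φ_{k+1}(ν)`. -/
noncomputable def ellS (d g : ℕ) (lam : ℕ → Fin d → ℚ) (ν : Fin d → ℚ) (s : ℚ) (k : ℕ) :
    Submodule ℚ (Fin d → ℚ) :=
  Submodule.span ℚ ((fun i => E d lam i) ''
    { i : ℕ | 1 ≤ i ∧ i < d + tVal d g lam (W d g lam ν k) ∧ pair d ν (E d lam i) ≤ s })

/-- `p(k)` (with the convention `λ_0 = 0`). -/
noncomputable def pVal (d g : ℕ) (lam : ℕ → Fin d → ℚ) (ν : Fin d → ℚ) (s : ℚ)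
    (k : ℕ) : ℕ :=
  if nVal d (W d g lam ν k) = 0 then
    if h : ((Finset.Icc 0 g).filter fun j =>
        pair d ν (if j = 0 then (0 : Fin d → ℚ) else lam j) ≤ s).Nonempty then
      ((Finset.Icc 0 g).filter fun j =>
        pair d ν (if j = 0 then (0 : Fin d → ℚ) else lam j) ≤ s).max' h
    else 0
  else
    (insert (nVal d (W d g lam ν k))
      ((Finset.Ioo (nVal d (W d g lam ν k)) (tVal d g lam (W d g lam ν k))).filter fun j =>
        mVal d lam (W d g lam ν k) ≠ 0 ∧
          pair d ν (E d lam (mVal d lam (W d g lam ν k)) - lam (nVal d (W d g lam ν k)) + lam j)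
            ≤ s)).max' (Finset.insert_nonempty _ _)

/-- `q_η`: the index of the `≤_ν`-greatest element of `{e_1, …, e_d} ∩ ℓ(η)`, where
`ℓ(η) = span_ℚ{e_i : η_i ≠ 0}`. -/
noncomputable def qIdx (d : ℕ) (lam : ℕ → Fin d → ℚ) (ν η : Fin d → ℚ) : ℕ :=
  greatestIdx d lam ν ((Finset.Icc 1 d).filter fun i => pair d η (E d lam i) ≠ 0)

/-!
Induction on `k`, with the invariant that `w_k` minimises `⟨ν, ·⟩` on `J_k`. Let `K ∈ J_{k+1}`.
If some summand `v` of `K` can be added to `w_k` (an `e_i ∉ ℓ_k(ν)`, or any vector outside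
`ℓ_k(ν)` when `w_k` contains no `λ`), then
`⟨ν, K⟩ = ⟨ν, v⟩ + ⟨ν, K - v⟩ ≥ ⟨ν, e_{i(k)}⟩ + ⟨ν, w_k⟩ = ⟨ν, a_{k+1}⟩` by the choice of `i(k)`
and the minimality of `w_k`. Otherwise, since `dim ℓ_k(ν) = k`, `w_k` contains some `λ_n`, `K`
contains some `λ_q ∉ ℓ_k(ν)`, and the `k` vectors `e_i` of `K` all lie in `ℓ_k(ν)`; counting
dimensions, they are the `k - 1` vectors `e_i` of `w_k` together with `e_{m(k)}`. As `t(k) ≤ q`,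
monotonicity of the `λ_j` and `ν > 0` give `⟨ν, λ_{t(k)}⟩ ≤ ⟨ν, λ_q⟩`, hence
`⟨ν, b_{k+1}⟩ ≤ ⟨ν, K⟩`.
-/

section LinearAlgebra

variable {R V ι : Type*} [DivisionRing R] [AddCommGroup V] [Module R V]

theorem card_le_card_of_linearIndepOn_of_subset_span {v : ι → V} {X I : Finset ι}
    (hX : LinearIndepOn R v (X : Set ι))
    (hXI : ∀ x ∈ X, v x ∈ Submodule.span R (v '' (I : Set ι))) : X.card ≤ I.card := by
  classical
  have hle : Set.range (fun x : (X : Set ι) => v x) ≤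
      Submodule.span R ((I.image v : Finset V) : Set V) := by
    rintro _ ⟨x, rfl⟩
    simpa using hXI x x.2
  have := linearIndependent_le_span' _ hX _ hle
  simp only [Cardinal.mk_coe_finset, Finset.coe_sort_coe, Fintype.card_coe, Nat.cast_le] at this
  exact this.trans Finset.card_image_le

end LinearAlgebra

open Finset Submodule

variable {d g : ℕ} {lam : ℕ → Fin d → ℚ} {ν : Fin d → ℚ}

theorem pair_sum {ι : Type*} (ν : Fin d → ℚ) (s : Finset ι) (f : ι → Fin d → ℚ) :
    pair d ν (∑ i ∈ s, f i) = ∑ i ∈ s, pair d ν (f i) := by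
  simp only [pair, Finset.sum_apply, Finset.mul_sum]
  exact Finset.sum_comm

theorem E_succ (c : Fin d) : E d lam (c + 1) = Pi.single c 1 := by
  ext j
  simp [E, Pi.single_apply, Fin.ext_iff]

theorem E_add {j : ℕ} (hj : 1 ≤ j) : E d lam (d + j) = lam j := by
  rw [E, if_neg (by omega), Nat.add_sub_cancel_left]

theorem pair_E_succ (ν : Fin d → ℚ) (c : Fin d) : pair d ν (E d lam (c + 1)) = ν c := by
  simp [E_succ, pair, Pi.single_apply]

theorem linearIndepOn_E_Icc : LinearIndepOn ℚ (E d lam) (Set.Icc 1 d) := by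
  have hIcc : Set.range (fun c : Fin d => (c : ℕ) + 1) = Set.Icc 1 d := by
    ext i
    simp only [Set.mem_range, Set.mem_Icc]
    exact ⟨by rintro ⟨c, rfl⟩; omega, fun h => ⟨⟨i - 1, by omega⟩, by simp; omega⟩⟩
  rw [← hIcc, linearIndepOn_range_iff (fun a b h => Fin.ext (by simpa using h))]
  convert (Pi.basisFun ℚ (Fin d)).linearIndependent using 1
  ext c : 1
  simp [E_succ]

theorem pair_lam_le_pair_lam (hpos : ∀ i, 1 ≤ i → i ≤ d → 0 < pair d ν (E d lam i))
    (hmono : ∀ j, 1 ≤ j → j < g → ∀ i, lam j i ≤ lam (j + 1) i)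
    {j j' : ℕ} (hj : 1 ≤ j) (hjj' : j ≤ j') (hj'g : j' ≤ g) :
    pair d ν (lam j) ≤ pair d ν (lam j') := by
  have hν : ∀ c, 0 ≤ ν c := fun c => by
    simpa [pair_E_succ] using (hpos (c + 1) (by omega) (by omega)).le
  have hlam : ∀ c, lam j c ≤ lam j' c := by
    intro c
    induction j', hjj' using Nat.le_induction with
    | base => exact le_rfl
    | succ n _ ih => exact (ih (by omega)).trans (hmono n (by omega) (by omega) c)
  exact Finset.sum_le_sum fun c _ => mul_le_mul_of_nonneg_left (hlam c) (hν c)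

theorem E_mem_spanOf {I : Finset ℕ} {i : ℕ} (hi : i ∈ I) : E d lam i ∈ spanOf d lam I :=
  subset_span (Set.mem_image_of_mem _ hi)

theorem linearIndepOn_E_of_subset_Icc {S : Finset ℕ} (hS : S ⊆ Icc 1 d) :
    LinearIndepOn ℚ (E d lam) (S : Set ℕ) :=
  linearIndepOn_E_Icc.mono (by simpa [← Finset.coe_Icc] using hS)

theorem forall_le_or_exists_add_mem (I : Finset ℕ) (d : ℕ) :
    (∀ i ∈ I, i ≤ d) ∨ ∃ n, 1 ≤ n ∧ d + n ∈ I := by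
  by_contra! h
  obtain ⟨⟨i, hi, hid⟩, hn⟩ := h
  exact hn (i - d) (by omega) (by rwa [Nat.add_sub_cancel' hid.le])

/-- `{e_1, …, e_d} ∩ ℓ_k(ν)`, by index. -/
noncomputable def stdInSpan (d : ℕ) (lam : ℕ → Fin d → ℚ) (I : Finset ℕ) : Finset ℕ :=
  (Icc 1 d).filter fun i => E d lam i ∈ spanOf d lam I

theorem spanOf_le_of_subset_stdInSpan {I X : Finset ℕ} (h : X ⊆ stdInSpan d lam I) :
    spanOf d lam X ≤ spanOf d lam I :=
  span_le.mpr <| Set.image_subset_iff.mpr fun _ hx => (mem_filter.mp (h hx)).2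

theorem mVal_mem_stdInSpan {I : Finset ℕ} (hm : mVal d lam I ≠ 0) :
    mVal d lam I ∈ stdInSpan d lam I \ I := by
  rw [mVal] at hm ⊢
  split_ifs at hm ⊢ with h
  · exact min'_mem _ h
  · exact absurd rfl hm

theorem mVal_eq_of_sdiff_eq_singleton {I : Finset ℕ} {a : ℕ}
    (h : stdInSpan d lam I \ I = {a}) : mVal d lam I = a := by
  have hne : (stdInSpan d lam I \ I).Nonempty := h ▸ singleton_nonempty a
  change (if h : (stdInSpan d lam I \ I).Nonempty then (stdInSpan d lam I \ I).min' h
    else 0) = a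
  rw [dif_pos hne]
  exact mem_singleton.mp (h ▸ min'_mem _ hne)

theorem tVal_spec {I : Finset ℕ} (ht : tVal d g lam I ≠ g + 1) :
    tVal d g lam I ∈ Icc 1 g ∧ lam (tVal d g lam I) ∉ spanOf d lam I := by
  rw [tVal] at ht ⊢
  split_ifs at ht ⊢ with h
  · exact mem_filter.mp (min'_mem _ h)
  · exact absurd rfl ht

theorem tVal_le {I : Finset ℕ} {q : ℕ} (hq : q ∈ Icc 1 g) (hsp : lam q ∉ spanOf d lam I) :
    tVal d g lam I ≤ q := by
  have hq' : q ∈ (Icc 1 g).filter fun j => lam j ∉ spanOf d lam I := mem_filter.mpr ⟨hq, hsp⟩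
  rw [tVal, dif_pos ⟨q, hq'⟩]
  exact min'_le _ _ hq'

namespace IdxOk

variable {k : ℕ} {I K : Finset ℕ}

theorem linearIndepOn (hI : IdxOk d g lam k I) : LinearIndepOn ℚ (E d lam) (I : Set ℕ) :=
  hI.2.2.2

theorem of_subset_Icc {S : Finset ℕ} (hS : S ⊆ Icc 1 d) : IdxOk d g lam S.card S := by
  refine ⟨rfl, hS.trans (Icc_subset_Icc_right (by omega)), ?_, linearIndepOn_E_of_subset_Icc hS⟩
  rw [Finset.card_le_one]
  intro a ha
  have := (mem_Icc.mp (hS (mem_filter.mp ha).1)).2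
  have := (mem_filter.mp ha).2
  omega

theorem erase (hK : IdxOk d g lam (k + 1) K) {x : ℕ} (hx : x ∈ K) :
    IdxOk d g lam k (K.erase x) :=
  ⟨by rw [card_erase_of_mem hx, hK.1]; rfl, (erase_subset x K).trans hK.2.1,
    (card_le_card (filter_subset_filter _ (erase_subset x K))).trans hK.2.2.1,
    hK.linearIndepOn.mono (by simp)⟩

theorem insert (hI : IdxOk d g lam k I) {x : ℕ} (hx : x ∈ Icc 1 (d + g))
    (hsp : E d lam x ∉ spanOf d lam I) (hlam : x ≤ d ∨ ∀ i ∈ I, i ≤ d) :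
    IdxOk d g lam (k + 1) (insert x I) := by
  have hxI : x ∉ I := fun h => hsp (E_mem_spanOf h)
  refine ⟨by rw [card_insert_of_notMem hxI, hI.1], insert_subset hx hI.2.1, ?_, ?_⟩
  · rcases hlam with hxd | hId
    · rw [filter_insert, if_neg (by omega)]
      exact hI.2.2.1
    · rw [filter_insert, filter_false_of_mem fun i hi => by have := hId i hi; omega]
      split <;> simp
  · show LinearIndepOn ℚ (E d lam) ((Insert.insert x I : Finset ℕ) : Set ℕ)
    rw [coe_insert]
    exact (linearIndepOn_insert hxI).mpr ⟨hI.linearIndepOn, hsp⟩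

theorem mem_Icc (hI : IdxOk d g lam k I) {i : ℕ} (hi : i ∈ I) : 1 ≤ i ∧ i ≤ d + g :=
  Finset.mem_Icc.mp (hI.2.1 hi)

theorem card_le_of_subset_spanOf (hI : IdxOk d g lam k I) {X : Finset ℕ}
    (hX : LinearIndepOn ℚ (E d lam) (X : Set ℕ)) (h : ∀ x ∈ X, E d lam x ∈ spanOf d lam I) :
    X.card ≤ k :=
  hI.1 ▸ card_le_card_of_linearIndepOn_of_subset_span hX h

theorem exists_notMem_spanOf (hI : IdxOk d g lam k I) (hK : IdxOk d g lam (k + 1) K) :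
    ∃ x ∈ K, E d lam x ∉ spanOf d lam I := by
  by_contra! h
  have := hI.card_le_of_subset_spanOf hK.linearIndepOn h
  rw [hK.1] at this
  omega

theorem notMem_of_insert (hI : IdxOk d g lam k I) {x : ℕ}
    (h : IdxOk d g lam (k + 1) (Insert.insert x I)) : x ∉ I := fun hx => by
  have := h.1
  rw [Finset.insert_eq_of_mem hx, hI.1] at this
  omega

theorem le_of_ne_lam (hI : IdxOk d g lam k I) {n i : ℕ} (hn : d + n ∈ I) (hn1 : 1 ≤ n)
    (hi : i ∈ I) (hin : i ≠ d + n) : i ≤ d := by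
  by_contra! hid
  exact hin (Finset.card_le_one.mp hI.2.2.1 i (mem_filter.mpr ⟨hi, hid⟩) (d + n)
    (mem_filter.mpr ⟨hn, by omega⟩))

theorem nVal_eq (hI : IdxOk d g lam k I) {n : ℕ} (hn : d + n ∈ I) (hn1 : 1 ≤ n) :
    nVal d I = n := by
  have hmem : d + n ∈ I.filter fun i => d + 1 ≤ i := mem_filter.mpr ⟨hn, by omega⟩
  rw [nVal, dif_pos ⟨_, hmem⟩]
  have hmin := min'_mem _ ⟨_, hmem⟩
  have hle := min'_le _ _ hmem
  rw [mem_filter] at hmin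
  by_cases h : (I.filter fun i => d + 1 ≤ i).min' ⟨_, hmem⟩ = d + n
  · omega
  · have := hI.le_of_ne_lam hn hn1 hmin.1 h
    omega

theorem card_stdInSpan_le (hI : IdxOk d g lam k I) : (stdInSpan d lam I).card ≤ k :=
  hI.card_le_of_subset_spanOf (linearIndepOn_E_of_subset_Icc (filter_subset _ _))
    fun _ hx => (mem_filter.mp hx).2

theorem mVal_eq_zero (hI : IdxOk d g lam k I) (hId : ∀ i ∈ I, i ≤ d) : mVal d lam I = 0 := by
  by_contra hm
  obtain ⟨hmS, hmI⟩ := mem_sdiff.mp (mVal_mem_stdInSpan hm)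
  have hIS : I ⊆ stdInSpan d lam I := fun i hi =>
    mem_filter.mpr ⟨Finset.mem_Icc.mpr ⟨(hI.mem_Icc hi).1, hId i hi⟩, E_mem_spanOf hi⟩
  have hlt := card_lt_card ((Finset.ssubset_iff_of_subset hIS).mpr ⟨_, hmS, hmI⟩)
  have := hI.card_stdInSpan_le
  rw [hI.1] at hlt
  omega

theorem erase_lam_subset_stdInSpan (hI : IdxOk d g lam k I) {n : ℕ} (hn : d + n ∈ I)
    (hn1 : 1 ≤ n) : I.erase (d + n) ⊆ stdInSpan d lam I := fun i hi => by
  obtain ⟨hin, hiI⟩ := mem_erase.mp hi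
  exact mem_filter.mpr ⟨Finset.mem_Icc.mpr ⟨(hI.mem_Icc hiI).1, hI.le_of_ne_lam hn hn1 hiI hin⟩,
    E_mem_spanOf hiI⟩

/-- Dimension count: the `k` vectors `e_i` of `K` lie in `ℓ_k`, which contains only `k` of them,
namely those of `w_k` and `e_{m(k)}`. -/
theorem erase_lam_eq_insert_mVal (hI : IdxOk d g lam k I) {n : ℕ} (hn : d + n ∈ I)
    (hn1 : 1 ≤ n) (hK : IdxOk d g lam (k + 1) K) {q : ℕ} (hq : d + q ∈ K) (hq1 : 1 ≤ q)
    (hKsp : ∀ y ∈ K, y ≤ d → E d lam y ∈ spanOf d lam I) :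
    mVal d lam I ≠ 0 ∧ mVal d lam I ∉ I.erase (d + n) ∧
      K.erase (d + q) = Insert.insert (mVal d lam I) (I.erase (d + n)) := by
  set C := stdInSpan d lam I
  set S := I.erase (d + n)
  have hTC : K.erase (d + q) ⊆ C := fun y hy => by
    obtain ⟨hyq, hyK⟩ := mem_erase.mp hy
    have hyd := hK.le_of_ne_lam hq hq1 hyK hyq
    exact mem_filter.mpr ⟨Finset.mem_Icc.mpr ⟨(hK.mem_Icc hyK).1, hyd⟩, hKsp y hyK hyd⟩
  have hTcard : (K.erase (d + q)).card = k := by rw [card_erase_of_mem hq, hK.1]; rfl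
  have hTC_eq : K.erase (d + q) = C :=
    eq_of_subset_of_card_le hTC (hTcard ▸ hI.card_stdInSpan_le)
  have hSC : S ⊆ C := hI.erase_lam_subset_stdInSpan hn hn1
  have hScard : S.card + 1 = k := by
    rw [card_erase_of_mem hn, Nat.sub_add_cancel (card_pos.mpr ⟨_, hn⟩), hI.1]
  have hCI : C \ I = C \ S := by
    ext y
    have : y ∈ C → y ≠ d + n := fun hy => by
      have := (Finset.mem_Icc.mp (mem_filter.mp hy).1).2; omega
    simp only [mem_sdiff, S, mem_erase]
    tauto
  obtain ⟨a, ha⟩ := card_eq_one.mp (show (C \ S).card = 1 by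
    rw [card_sdiff_of_subset hSC, ← hTC_eq, hTcard]; omega)
  have hm : mVal d lam I = a := mVal_eq_of_sdiff_eq_singleton (hCI.trans ha)
  have haCS : a ∈ C \ S := ha ▸ mem_singleton_self a
  obtain ⟨haC, haS⟩ := mem_sdiff.mp haCS
  refine ⟨hm ▸ (by have := (Finset.mem_Icc.mp (mem_filter.mp haC).1).1; omega), hm ▸ haS, ?_⟩
  rw [hTC_eq, hm, ← sdiff_union_of_subset hSC, ha, insert_eq]

theorem exchange (hI : IdxOk d g lam k I) (hm : mVal d lam I ≠ 0)
    (ht : tVal d g lam I ≠ g + 1) :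
    nVal d I ≠ 0 ∧ IdxOk d g lam (k + 1) (Insert.insert (mVal d lam I)
      (Insert.insert (d + tVal d g lam I) (I.erase (d + nVal d I)))) := by
  obtain ⟨n, hn1, hn⟩ :=
    (forall_le_or_exists_add_mem I d).resolve_left fun h => hm (hI.mVal_eq_zero h)
  rw [hI.nVal_eq hn hn1]
  obtain ⟨hmC, hmI⟩ := mem_sdiff.mp (mVal_mem_stdInSpan hm)
  obtain ⟨htg, htsp⟩ := tVal_spec ht
  set S := I.erase (d + n)
  have hmSC : Insert.insert (mVal d lam I) S ⊆ stdInSpan d lam I :=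
    insert_subset hmC (hI.erase_lam_subset_stdInSpan hn hn1)
  have hmSd : Insert.insert (mVal d lam I) S ⊆ Icc 1 d := hmSC.trans (filter_subset _ _)
  have hcard : (Insert.insert (mVal d lam I) S).card = k := by
    rw [card_insert_of_notMem fun h => hmI (mem_of_mem_erase h), card_erase_of_mem hn,
      Nat.sub_add_cancel (card_pos.mpr ⟨_, hn⟩), hI.1]
  have hmSok : IdxOk d g lam k (Insert.insert (mVal d lam I) S) :=
    hcard ▸ IdxOk.of_subset_Icc hmSd
  have hnew := hmSok.insert (x := d + tVal d g lam I)
    (by simp only [Finset.mem_Icc] at htg ⊢; omega)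
    (by rw [E_add (Finset.mem_Icc.mp htg).1]
        exact fun h => htsp (spanOf_le_of_subset_stdInSpan hmSC h))
    (Or.inr fun i hi => (Finset.mem_Icc.mp (hmSd hi)).2)
  rw [Finset.insert_comm] at hnew
  exact ⟨by omega, hnew⟩

theorem exists_insert (hI : IdxOk d g lam k I) (hkd : k + 1 ≤ d) :
    ∃ x, IdxOk d g lam (k + 1) (Insert.insert x I) := by
  obtain ⟨x, hx, hxsp⟩ : ∃ x ∈ Icc 1 d, E d lam x ∉ spanOf d lam I := by
    by_contra! h
    have := hI.card_le_of_subset_spanOf (linearIndepOn_E_of_subset_Icc subset_rfl) h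
    simp only [Nat.card_Icc] at this
    omega
  have hx' := Finset.mem_Icc.mp hx
  exact ⟨x, hI.insert (Finset.mem_Icc.mpr ⟨hx'.1, by omega⟩) hxsp (Or.inl hx'.2)⟩

end IdxOk

noncomputable def weight (d : ℕ) (lam : ℕ → Fin d → ℚ) (ν : Fin d → ℚ) (I : Finset ℕ) : ℚ :=
  ∑ i ∈ I, pair d ν (E d lam i)

def IsOptimal (d g : ℕ) (lam : ℕ → Fin d → ℚ) (ν : Fin d → ℚ) (k : ℕ) (I : Finset ℕ) : Prop :=
  IdxOk d g lam k I ∧ ∀ K, IdxOk d g lam k K → weight d lam ν I ≤ weight d lam ν K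

theorem pair_sum_E_eq_weight (I : Finset ℕ) :
    pair d ν (∑ i ∈ I, E d lam i) = weight d lam ν I :=
  pair_sum ν I _

theorem weight_insert {I : Finset ℕ} {x : ℕ} (hx : x ∉ I) :
    weight d lam ν (Insert.insert x I) = pair d ν (E d lam x) + weight d lam ν I :=
  sum_insert hx

theorem weight_eq_erase {K : Finset ℕ} {x : ℕ} (hx : x ∈ K) :
    weight d lam ν K = pair d ν (E d lam x) + weight d lam ν (K.erase x) := by
  rw [← weight_insert (notMem_erase x K), insert_erase hx]

theorem leastIdx_spec {S : Finset ℕ} (h : S.Nonempty) :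
    leastIdx d lam ν S ∈ S ∧
      ∀ x ∈ S, pair d ν (E d lam (leastIdx d lam ν S)) ≤ pair d ν (E d lam x) := by
  rw [leastIdx, dif_pos h]
  obtain ⟨y, hy, hkey⟩ := mem_image.mp (min'_mem (S.image (keyIdx d lam ν)) (h.image _))
  rw [← hkey]
  refine ⟨hy, fun x hx => ?_⟩
  have hle : keyIdx d lam ν y ≤ keyIdx d lam ν x := hkey ▸ min'_le _ _ (mem_image_of_mem _ hx)
  rcases Prod.Lex.le_iff.mp hle with hlt | ⟨heq, -⟩
  · exact hlt.le
  · exact heq.le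

theorem iVal_spec {k : ℕ} {I : Finset ℕ} (hI : IdxOk d g lam k I) (hkd : k + 1 ≤ d) :
    IdxOk d g lam (k + 1) (Insert.insert (iVal d g lam ν k I) I) ∧
      ∀ x, IdxOk d g lam (k + 1) (Insert.insert x I) →
        pair d ν (E d lam (iVal d g lam ν k I)) ≤ pair d ν (E d lam x) := by
  have hmem : ∀ x, x ∈ (Icc 1 (d + g)).filter (fun i => IdxOk d g lam (k + 1) (Insert.insert i I))
      ↔ IdxOk d g lam (k + 1) (Insert.insert x I) := fun x =>
    ⟨fun h => (mem_filter.mp h).2, fun h => mem_filter.mpr ⟨h.2.1 (mem_insert_self x I), h⟩⟩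
  obtain ⟨x, hx⟩ := hI.exists_insert hkd
  obtain ⟨hmin, hle⟩ := leastIdx_spec (lam := lam) (ν := ν) ⟨x, (hmem x).mpr hx⟩
  exact ⟨(hmem _).mp hmin, fun y hy => hle y ((hmem y).mpr hy)⟩

theorem isOptimal_W_one (hpos : ∀ i, 1 ≤ i → i ≤ d → 0 < pair d ν (E d lam i))
    (hmono : ∀ j, 1 ≤ j → j < g → ∀ i, lam j i ≤ lam (j + 1) i) (hg : 1 ≤ g)
    (hlam : lam 1 ≠ 0) : IsOptimal d g lam ν 1 (W d g lam ν 1) := by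
  set S := Insert.insert (d + 1) (Icc 1 d)
  obtain ⟨hℓS, hℓle⟩ := leastIdx_spec (lam := lam) (ν := ν) (S := S) (insert_nonempty _ _)
  set ℓ := leastIdx d lam ν S
  change IsOptimal d g lam ν 1 {ℓ}
  have hℓ : ℓ = d + 1 ∨ (1 ≤ ℓ ∧ ℓ ≤ d) := by simpa [S] using hℓS
  have hE : E d lam ℓ ≠ 0 := by
    rcases hℓ with h | ⟨h1, h2⟩
    · rwa [h, E_add le_rfl]
    · intro h0
      have := hpos ℓ h1 h2
      simp [h0, pair] at this
  have hok : IdxOk d g lam 1 {ℓ} := by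
    have := (IdxOk.of_subset_Icc (d := d) (g := g) (lam := lam) (empty_subset (Icc 1 d))).insert
      (x := ℓ) (Finset.mem_Icc.mpr (by omega)) (by simpa [spanOf] using hE) (Or.inr (by simp))
    simpa using this
  refine ⟨hok, fun K hK => ?_⟩
  obtain ⟨x, rfl⟩ := card_eq_one.mp hK.1
  obtain ⟨hx1, hxdg⟩ := hK.mem_Icc (mem_singleton_self x)
  simp only [weight, sum_singleton]
  by_cases hxd : x ≤ d
  · exact hℓle x (mem_insert_of_mem (Finset.mem_Icc.mpr ⟨hx1, hxd⟩))
  · calc pair d ν (E d lam ℓ) ≤ pair d ν (E d lam (d + 1)) := hℓle _ (mem_insert_self _ _)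
      _ = pair d ν (lam 1) := by rw [E_add le_rfl]
      _ ≤ pair d ν (lam (x - d)) := pair_lam_le_pair_lam hpos hmono le_rfl (by omega) (by omega)
      _ = pair d ν (E d lam x) := by
        rw [← E_add (d := d) (lam := lam) (j := x - d) (by omega), Nat.add_sub_cancel' (by omega)]

theorem IsOptimal.weight_insert_iVal_le {k : ℕ} {I K : Finset ℕ}
    (hI : IsOptimal d g lam ν k I) (hkd : k + 1 ≤ d) (hK : IdxOk d g lam (k + 1) K) {x : ℕ}
    (hxK : x ∈ K) (hx : IdxOk d g lam (k + 1) (Insert.insert x I)) :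
    weight d lam ν (Insert.insert (iVal d g lam ν k I) I) ≤ weight d lam ν K := by
  obtain ⟨hiok, hile⟩ := iVal_spec (ν := ν) hI.1 hkd
  rw [weight_insert (hI.1.notMem_of_insert hiok), weight_eq_erase hxK]
  exact add_le_add (hile x hx) (hI.2 _ (hK.erase hxK))

theorem weight_exchange_le (hpos : ∀ i, 1 ≤ i → i ≤ d → 0 < pair d ν (E d lam i))
    (hmono : ∀ j, 1 ≤ j → j < g → ∀ i, lam j i ≤ lam (j + 1) i) {k : ℕ} {I K : Finset ℕ}
    (hI : IdxOk d g lam k I) {n : ℕ} (hn : d + n ∈ I) (hn1 : 1 ≤ n)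
    (hK : IdxOk d g lam (k + 1) K) {q : ℕ} (hq : d + q ∈ K) (hq1 : 1 ≤ q)
    (hqsp : lam q ∉ spanOf d lam I) (hKsp : ∀ y ∈ K, y ≤ d → E d lam y ∈ spanOf d lam I) :
    mVal d lam I ≠ 0 ∧ tVal d g lam I ≠ g + 1 ∧
      weight d lam ν (Insert.insert (mVal d lam I)
        (Insert.insert (d + tVal d g lam I) (I.erase (d + n)))) ≤ weight d lam ν K := by
  obtain ⟨hm0, hmS, hKe⟩ := hI.erase_lam_eq_insert_mVal hn hn1 hK hq hq1 hKsp
  have hqg : q ≤ g := by have := hK.mem_Icc hq; omega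
  have htq : tVal d g lam I ≤ q := tVal_le (Finset.mem_Icc.mpr ⟨hq1, hqg⟩) hqsp
  have ht : tVal d g lam I ≠ g + 1 := by omega
  have ht1 : 1 ≤ tVal d g lam I := (Finset.mem_Icc.mp (tVal_spec ht).1).1
  have hmd : mVal d lam I ≤ d := by
    have := (mem_insert_self _ _ : mVal d lam I ∈ Insert.insert _ (I.erase (d + n)))
    rw [← hKe] at this
    exact hK.le_of_ne_lam hq hq1 (mem_of_mem_erase this) (ne_of_mem_erase this)
  have htS : d + tVal d g lam I ∉ I.erase (d + n) := fun h =>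
    absurd (hI.le_of_ne_lam hn hn1 (mem_of_mem_erase h) (ne_of_mem_erase h)) (by omega)
  refine ⟨hm0, ht, ?_⟩
  rw [weight_eq_erase hq, hKe, weight_insert hmS,
    weight_insert (by simp only [mem_insert, not_or]; exact ⟨by omega, hmS⟩), weight_insert htS,
    E_add ht1, E_add hq1]
  have := pair_lam_le_pair_lam hpos hmono ht1 htq hqg
  linarith

theorem IsOptimal.weight_step_le (hpos : ∀ i, 1 ≤ i → i ≤ d → 0 < pair d ν (E d lam i))
    (hmono : ∀ j, 1 ≤ j → j < g → ∀ i, lam j i ≤ lam (j + 1) i) {k : ℕ} {I K : Finset ℕ}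
    (hI : IsOptimal d g lam ν k I) (hkd : k + 1 ≤ d) (hK : IdxOk d g lam (k + 1) K) :
    weight d lam ν (Insert.insert (iVal d g lam ν k I) I) ≤ weight d lam ν K ∨
      (mVal d lam I ≠ 0 ∧ tVal d g lam I ≠ g + 1 ∧
        weight d lam ν (Insert.insert (mVal d lam I)
          (Insert.insert (d + tVal d g lam I) (I.erase (d + nVal d I)))) ≤ weight d lam ν K) := by
  by_cases hins : ∃ x ∈ K, IdxOk d g lam (k + 1) (Insert.insert x I)
  · obtain ⟨x, hxK, hx⟩ := hins
    exact Or.inl (hI.weight_insert_iVal_le hkd hK hxK hx)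
  push Not at hins
  have hKsp : ∀ y ∈ K, y ≤ d → E d lam y ∈ spanOf d lam I := fun y hyK hyd => by
    by_contra hy
    exact hins y hyK (hI.1.insert (hK.2.1 hyK) hy (Or.inl hyd))
  obtain ⟨x, hxK, hxsp⟩ := hI.1.exists_notMem_spanOf hK
  have hxd : d < x := by
    by_contra! h
    exact hxsp (hKsp x hxK h)
  obtain ⟨n, hn1, hn⟩ := (forall_le_or_exists_add_mem I d).resolve_left fun h =>
    hins x hxK (hI.1.insert (hK.2.1 hxK) hxsp (Or.inr h))
  have hxq : x = d + (x - d) := by omega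
  rw [hxq, E_add (by omega)] at hxsp
  rw [hxq] at hxK
  rw [hI.1.nVal_eq hn hn1]
  exact Or.inr (weight_exchange_le hpos hmono hI.1 hn hn1 hK hxK (by omega) hxsp hKsp)

theorem IsOptimal.step (hpos : ∀ i, 1 ≤ i → i ≤ d → 0 < pair d ν (E d lam i))
    (hmono : ∀ j, 1 ≤ j → j < g → ∀ i, lam j i ≤ lam (j + 1) i) {k : ℕ} {I : Finset ℕ}
    (hI : IsOptimal d g lam ν k I) (hkd : k + 1 ≤ d) :
    IsOptimal d g lam ν (k + 1) (step d g lam ν k I) := by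
  have hbound := fun K (hK : IdxOk d g lam (k + 1) K) => hI.weight_step_le hpos hmono hkd hK
  have haok := (iVal_spec (ν := ν) hI.1 hkd).1
  rw [QO.step]
  simp only [pair_sum_E_eq_weight]
  by_cases hmt : mVal d lam I = 0 ∨ tVal d g lam I = g + 1
  · rw [if_pos hmt]
    exact ⟨haok, fun K hK => (hbound K hK).resolve_right (by tauto)⟩
  obtain ⟨hn, hbok⟩ := hI.1.exchange (not_or.mp hmt).1 (not_or.mp hmt).2
  rw [if_neg hmt, if_neg hn]
  split_ifs with hab
  · exact ⟨haok, fun K hK => (hbound K hK).elim id fun h => hab.trans h.2.2⟩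
  · exact ⟨hbok, fun K hK => (hbound K hK).elim (fun h => (not_le.mp hab).le.trans h)
      fun h => h.2.2⟩

theorem isOptimal_W (hpos : ∀ i, 1 ≤ i → i ≤ d → 0 < pair d ν (E d lam i))
    (hmono : ∀ j, 1 ≤ j → j < g → ∀ i, lam j i ≤ lam (j + 1) i) (hg : 1 ≤ g)
    (hlam : lam 1 ≠ 0) {k : ℕ} (hk1 : 1 ≤ k) (hkd : k ≤ d) :
    IsOptimal d g lam ν k (W d g lam ν k) := by
  induction k, hk1 using Nat.le_induction with
  | base => exact isOptimal_W_one hpos hmono hg hlam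
  | succ k hk ih =>
    obtain ⟨k, rfl⟩ := Nat.exists_eq_add_of_le' hk
    exact (ih (by omega)).step hpos hmono hkd

theorem mem_Jfin_iff {k : ℕ} {w : Fin d → ℚ} : w ∈ Jfin d g lam k ↔ w ∈ Jset d g lam k := by
  simp only [Jfin, Jset, mem_image, mem_filter, mem_powerset]
  exact ⟨fun ⟨I, hI, hw⟩ => ⟨I, hI.2, hw.symm⟩, fun ⟨I, hI, hw⟩ => ⟨I, ⟨hI.2.1, hI⟩, hw.symm⟩⟩

theorem ordJ_eq_of_forall_le {k : ℕ} {w : Fin d → ℚ} (hw : w ∈ Jset d g lam k)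
    (hle : ∀ w' ∈ Jset d g lam k, pair d ν w ≤ pair d ν w') : ordJ d g lam k ν = pair d ν w := by
  have hne : (Jfin d g lam k).Nonempty := ⟨w, mem_Jfin_iff.mpr hw⟩
  rw [ordJ, dif_pos hne]
  refine le_antisymm (min'_le _ _ (mem_image_of_mem _ (mem_Jfin_iff.mpr hw))) ?_
  refine le_min' _ _ _ fun y hy => ?_
  obtain ⟨w', hw', rfl⟩ := mem_image.mp hy
  exact hle w' (mem_Jfin_iff.mp hw')

theorem IsOptimal.pair_le {k : ℕ} {I : Finset ℕ} (hI : IsOptimal d g lam ν k I) {w : Fin d → ℚ}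
    (hw : w ∈ Jset d g lam k) : pair d ν (∑ i ∈ I, E d lam i) ≤ pair d ν w := by
  obtain ⟨K, hK, rfl⟩ := hw
  rw [pair_sum_E_eq_weight, pair_sum_E_eq_weight]
  exact hI.2 K hK

theorem statement0_general (d g : ℕ) (lam : ℕ → Fin d → ℚ) (hg : 1 ≤ g)
    (hmono : ∀ j, 1 ≤ j → j < g → ∀ i, lam j i ≤ lam (j + 1) i)
    (hnotin : ∀ j, 1 ≤ j → j ≤ g → lam j ∉ Mlat d lam (j - 1))
    (ν : Fin d → ℚ)
    (hpos : ∀ i, 1 ≤ i → i ≤ d → 0 < pair d ν (E d lam i))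
    (k : ℕ) (hk1 : 1 ≤ k) (hkd : k ≤ d) :
    wVec d g lam ν k ∈ Jset d g lam k ∧
      pair d ν (wVec d g lam ν k) = ordJ d g lam k ν ∧
      ∀ w ∈ Jset d g lam k, pair d ν (wVec d g lam ν k) ≤ pair d ν w := by
  have hlam : lam 1 ≠ 0 := fun h => hnotin 1 le_rfl hg (h ▸ zero_mem _)
  have hopt := isOptimal_W hpos hmono hg hlam (ν := ν) hk1 hkd
  have hmem : wVec d g lam ν k ∈ Jset d g lam k := ⟨_, hopt.1, rfl⟩
  exact ⟨hmem, (ordJ_eq_of_forall_le hmem fun _ => hopt.pair_le).symm, fun _ => hopt.pair_le⟩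

/-- For every `ν ∈ N` with `⟨ν, e_i⟩ > 0` for all `1 ≤ i ≤ d` and every `1 ≤ k ≤ d`,
the vector `w_k` produced by the recursive algorithm belongs to the finite set `J_k` and
computes the support function of the `k`-th logarithmic jacobian ideal at `ν`, that is,
`⟨ν, w_k⟩ = ord_{J_k}(ν) = min_{w ∈ J_k} ⟨ν, w⟩`. -/
theorem statement0 (d g : ℕ) (lam : ℕ → Fin d → ℚ) (hd : 1 ≤ d) (hg : 1 ≤ g)
    (hnn : ∀ j, 1 ≤ j → j ≤ g → ∀ i, 0 ≤ lam j i)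
    (hmono : ∀ j, 1 ≤ j → j < g → ∀ i, lam j i ≤ lam (j + 1) i)
    (hnotin : ∀ j, 1 ≤ j → j ≤ g → lam j ∉ Mlat d lam (j - 1))
    (ν : Fin d → ℚ) (hν : ν ∈ Ndual d g lam)
    (hpos : ∀ i, 1 ≤ i → i ≤ d → 0 < pair d ν (E d lam i))
    (k : ℕ) (hk1 : 1 ≤ k) (hkd : k ≤ d) :
    wVec d g lam ν k ∈ Jset d g lam k ∧
      pair d ν (wVec d g lam ν k) = ordJ d g lam k ν ∧
      ∀ w ∈ Jset d g lam k, pair d ν (wVec d g lam ν k) ≤ pair d ν w :=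
  statement0_general d g lam hg hmono hnotin ν hpos k hk1 hkd

end QO
end

section
/- Let A be a commutative ring which is a ℚ-algebra, let G be a subgroup of ℚ^d, and let f : G → A[[t]] be a map such that every f(w) is a power series with constant term 1 and f(w + w') = f(w)·f(w') for all w, w' ∈ G. Let w_1, …, w_k ∈ G be linearly independent over ℚ and let ℓ ⊆ ℚ^d be their ℚ-linear span. Then for every w ∈ G ∩ ℓ and every integer s ≥ 1, the coefficient of t^s in f(w) belongs to the ℚ-subalgebra of A generated by the coefficients of t^1, …, t^s in the series f(w_1), …, f(w_k). -/
/-!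
Some multiple `q • v` with `q ≠ 0` lies in the subgroup generated by the `w_l`. Since `f` turns
sums into products and inverts power series with constant term `1` (whose inverses have
coefficients polynomial in the original ones), `f (q • v) = f v ^ q` has its coefficients up to
degree `s` in the subalgebra `B` generated by the given coefficients. Finally, if `g` has
constant term `1` and its coefficients below degree `n` lie in `B`, then
`coeff n (g ^ q) ≡ q • coeff n g` modulo `B`; as `q` is invertible in `ℚ`, induction on `n`
recovers the coefficients of `g = f v` from those of `g ^ q`.
-/

theorem AddSubgroup.exists_nsmul_mem_closure_of_mem_span_rat {V : Type*} [AddCommGroup V]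
    [Module ℚ V] {G : AddSubgroup V} {ι : Type*} {w : ι → G} {v : G}
    (hv : (v : V) ∈ Submodule.span ℚ (Set.range fun i => (w i : V))) :
    ∃ n : ℕ, n ≠ 0 ∧ n • v ∈ AddSubgroup.closure (Set.range w) := by
  obtain ⟨y, hy, z, hvy⟩ := (IsLocalization.mem_span_iff (nonZeroDivisors ℤ) (S := ℚ)).1 hv
  have hz : (z : ℤ) ≠ 0 := nonZeroDivisors.coe_ne_zero z
  have hzv : G.subtype ((z : ℤ) • v) = y := by
    rw [map_zsmul, G.coe_subtype, hvy, IsFractionRing.mk'_eq_div, ← Int.cast_smul_eq_zsmul ℚ,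
      smul_smul]
    simp [hz]
  rw [← Submodule.mem_toAddSubgroup, Submodule.span_int_eq_addSubgroupClosure, Set.range_comp',
    ← G.coe_subtype, ← AddMonoidHom.map_closure, ← hzv,
    AddSubgroup.mem_map_iff_mem G.subtype_injective] at hy
  refine ⟨(z : ℤ).natAbs, Int.natAbs_ne_zero.2 hz, ?_⟩
  rcases Int.natAbs_eq z with h | h
  · rwa [h, natCast_zsmul] at hy
  · rwa [h, neg_smul, natCast_zsmul, neg_mem_iff] at hy

section AddHom

variable {G M : Type*} [AddGroup G] [Monoid M] {f : G → M}

theorem apply_zero_eq_one_of_apply_add (hmul : ∀ w w', f (w + w') = f w * f w')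
    (h0 : IsUnit (f 0)) : f 0 = 1 :=
  h0.mul_eq_left.1 (by rw [← hmul, add_zero])

theorem apply_nsmul_eq_pow_of_apply_add (hmul : ∀ w w', f (w + w') = f w * f w') (h0 : f 0 = 1)
    (m : ℕ) (w : G) : f (m • w) = f w ^ m := by
  induction m with
  | zero => rw [zero_smul, pow_zero, h0]
  | succ m ih => rw [succ_nsmul, hmul, ih, pow_succ]

end AddHom

namespace PowerSeries

variable {A : Type*} [Ring A]

def coeffLESubring (S : Subring A) (n : ℕ) : Subring A⟦X⟧ where
  carrier := {g | ∀ j ≤ n, coeff j g ∈ S}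
  mul_mem' {g h} hg hh j hj := by
    rw [coeff_mul]
    refine sum_mem fun p hp => mul_mem (hg _ ?_) (hh _ ?_) <;>
      linarith [Finset.HasAntidiagonal.mem_antidiagonal.1 hp]
  one_mem' j _ := by
    rw [coeff_one]
    split_ifs
    exacts [one_mem S, zero_mem S]
  add_mem' hg hh j hj := by
    rw [map_add]
    exact add_mem (hg j hj) (hh j hj)
  zero_mem' j _ := by
    rw [map_zero]
    exact zero_mem S
  neg_mem' hg j hj := by
    rw [map_neg]
    exact neg_mem (hg j hj)

variable {S : Subring A} {m n : ℕ} {g h : A⟦X⟧}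

theorem mem_coeffLESubring : g ∈ coeffLESubring S n ↔ ∀ j ≤ n, coeff j g ∈ S := Iff.rfl

theorem mem_coeffLESubring_succ :
    g ∈ coeffLESubring S (n + 1) ↔ g ∈ coeffLESubring S n ∧ coeff (n + 1) g ∈ S := by
  simp only [mem_coeffLESubring, Nat.le_succ_iff, or_imp, forall_and, forall_eq, and_comm]

theorem coeff_succ_mul_sub_mem (hg0 : constantCoeff g = 1) (hh0 : constantCoeff h = 1)
    (hg : g ∈ coeffLESubring S n) (hh : h ∈ coeffLESubring S n) :
    coeff (n + 1) (g * h) - coeff (n + 1) g - coeff (n + 1) h ∈ S := by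
  rw [coeff_mul, Finset.Nat.sum_antidiagonal_eq_sum_range_succ_mk, Finset.sum_range_succ,
    Finset.sum_range_succ']
  simp only [Nat.sub_zero, Nat.sub_self, coeff_zero_eq_constantCoeff_apply, hg0, hh0, one_mul,
    mul_one, add_sub_cancel_right]
  refine sum_mem fun i hi => ?_
  have := Finset.mem_range.1 hi
  exact mul_mem (hg _ (by omega)) (hh _ (by omega))

theorem coeff_succ_pow_sub_nsmul_mem (hg0 : constantCoeff g = 1) (hg : g ∈ coeffLESubring S n)
    (m : ℕ) :
    coeff (n + 1) (g ^ m) - m • coeff (n + 1) g ∈ S := by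
  induction m with
  | zero => simp [coeff_one]
  | succ m ih =>
    have := coeff_succ_mul_sub_mem (by simp [hg0]) hg0 (pow_mem hg m) hg
    convert add_mem ih this using 1
    rw [pow_succ, succ_nsmul]; abel

theorem mem_coeffLESubring_of_mul_eq_one (hgh : g * h = 1) (hg0 : constantCoeff g = 1)
    (hg : g ∈ coeffLESubring S n) : h ∈ coeffLESubring S n := by
  have hh0 : constantCoeff h = 1 := by
    simpa [hg0] using congrArg constantCoeff hgh
  induction n with
  | zero =>
    intro j hj
    rw [Nat.le_zero.1 hj, coeff_zero_eq_constantCoeff_apply, hh0]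
    exact one_mem S
  | succ n ih =>
    rw [mem_coeffLESubring_succ] at hg ⊢
    refine ⟨ih hg.1, ?_⟩
    have := coeff_succ_mul_sub_mem hg0 hh0 hg.1 (ih hg.1)
    rw [hgh, coeff_one, if_neg n.succ_ne_zero, zero_sub, sub_eq_add_neg, ← neg_add] at this
    exact (add_mem_cancel_left hg.2).1 (neg_mem_iff.1 this)

theorem mem_coeffLESubring_of_pow_mem [Algebra ℚ A] (B : Subalgebra ℚ A) (hm : m ≠ 0)
    (hg0 : constantCoeff g = 1) (hgm : g ^ m ∈ coeffLESubring B.toSubring n) :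
    g ∈ coeffLESubring B.toSubring n := by
  induction n with
  | zero =>
    intro j hj
    rw [Nat.le_zero.1 hj, coeff_zero_eq_constantCoeff_apply, hg0]
    exact one_mem B
  | succ n ih =>
    rw [mem_coeffLESubring_succ] at hgm ⊢
    have hg := ih hgm.1
    refine ⟨hg, ?_⟩
    have hmg : m • coeff (n + 1) g ∈ B.toSubring := by
      simpa only [sub_sub_cancel] using sub_mem hgm.2 (coeff_succ_pow_sub_nsmul_mem hg0 hg m)
    rw [← inv_smul_smul₀ (Nat.cast_ne_zero.2 hm : (m : ℚ) ≠ 0) (coeff (n + 1) g),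
      Nat.cast_smul_eq_nsmul]
    exact B.smul_mem hmg _

theorem apply_zero_eq_one_of_constantCoeff {G : Type*} [AddGroup G] {f : G → A⟦X⟧}
    (hconst : ∀ w, constantCoeff (f w) = 1) (hmul : ∀ w w', f (w + w') = f w * f w') :
    f 0 = 1 :=
  apply_zero_eq_one_of_apply_add hmul (isUnit_iff_constantCoeff.2 (hconst 0 ▸ isUnit_one))

theorem apply_mem_coeffLESubring_of_mem_closure {G : Type*} [AddGroup G] {f : G → A⟦X⟧}
    (hconst : ∀ w, constantCoeff (f w) = 1) (hmul : ∀ w w', f (w + w') = f w * f w')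
    {s : Set G} (hs : ∀ w ∈ s, f w ∈ coeffLESubring S n) {w : G}
    (hw : w ∈ AddSubgroup.closure s) : f w ∈ coeffLESubring S n := by
  have hf0 := apply_zero_eq_one_of_constantCoeff hconst hmul
  induction hw using AddSubgroup.closure_induction with
  | mem w hw => exact hs w hw
  | zero => rw [hf0]; exact one_mem _
  | add w w' _ _ hw hw' => rw [hmul]; exact mul_mem hw hw'
  | neg w _ hw =>
    refine mem_coeffLESubring_of_mul_eq_one ?_ (hconst w) hw
    rw [← hmul, add_neg_cancel, hf0]

end PowerSeries

open PowerSeries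

theorem statement10_general (d : ℕ) (A : Type*) [CommRing A] [Algebra ℚ A]
    (G : AddSubgroup (Fin d → ℚ)) (f : G → PowerSeries A)
    (hconst : ∀ w, PowerSeries.constantCoeff (f w) = 1)
    (hmul : ∀ w w', f (w + w') = f w * f w')
    (k : ℕ) (wv : Fin k → G)
    (v : G)
    (hv : (v : Fin d → ℚ) ∈ Submodule.span ℚ (Set.range fun l => (wv l : Fin d → ℚ)))
    (s : ℕ) :
    PowerSeries.coeff s (f v) ∈
      Algebra.adjoin ℚ { a : A | ∃ (l : Fin k) (j : ℕ), 1 ≤ j ∧ j ≤ s ∧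
        a = PowerSeries.coeff j (f (wv l)) } := by
  obtain ⟨q, hq, hqv⟩ := AddSubgroup.exists_nsmul_mem_closure_of_mem_span_rat hv
  suffices f v ∈ coeffLESubring (Algebra.adjoin ℚ _).toSubring s from this s le_rfl
  refine mem_coeffLESubring_of_pow_mem _ hq (hconst v) ?_
  rw [← apply_nsmul_eq_pow_of_apply_add hmul (apply_zero_eq_one_of_constantCoeff hconst hmul)]
  refine apply_mem_coeffLESubring_of_mem_closure hconst hmul ?_ hqv
  rintro _ ⟨l, rfl⟩ (_ | j) hj
  · rw [coeff_zero_eq_constantCoeff_apply, hconst]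
    exact one_mem _
  · exact Algebra.subset_adjoin ⟨l, j + 1, j.succ_pos, hj, rfl⟩

/-- Let `A` be a commutative ring which is a `ℚ`-algebra, `G` a subgroup of `ℚ^d`, and
`f : G → A[[t]]` a map such that every `f(w)` is a power series with constant term `1`
and `f(w + w') = f(w)·f(w')` for all `w, w' ∈ G`. Let `w_1, …, w_k ∈ G` be linearly
independent over `ℚ` with `ℚ`-linear span `ℓ`. Then for every `w ∈ G ∩ ℓ` and every
integer `s ≥ 1`, the coefficient of `t^s` in `f(w)` belongs to the `ℚ`-subalgebra of `A`
generated by the coefficients of `t^1, …, t^s` in the series `f(w_1), …, f(w_k)`. -/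
theorem statement10 (d : ℕ) (A : Type*) [CommRing A] [Algebra ℚ A]
    (G : AddSubgroup (Fin d → ℚ)) (f : G → PowerSeries A)
    (hconst : ∀ w, PowerSeries.constantCoeff (f w) = 1)
    (hmul : ∀ w w', f (w + w') = f w * f w')
    (k : ℕ) (wv : Fin k → G)
    (hind : LinearIndependent ℚ (fun l => (wv l : Fin d → ℚ)))
    (v : G)
    (hv : (v : Fin d → ℚ) ∈ Submodule.span ℚ (Set.range fun l => (wv l : Fin d → ℚ)))
    (s : ℕ) (hs : 1 ≤ s) :
    PowerSeries.coeff s (f v) ∈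
      Algebra.adjoin ℚ { a : A | ∃ (l : Fin k) (j : ℕ), 1 ≤ j ∧ j ≤ s ∧
        a = PowerSeries.coeff j (f (wv l)) } :=
  statement10_general d A G f hconst hmul k wv v hv s
end
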